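/- Let G be a group with a length function ℓ, and suppose G contains an element γ of infinite order which generates an exponentially distorted copy of ℤ, i.e. there is a constant C > 0 such that ℓ(γⁿ) ≤ C·log(n+1) for all n ≥ 1. Then G does not have property RD with respect to ℓ. -/

import Mathlib

open scoped BigOperators ComplexOrder

/-- The ℓ²-norm of a finitely supported function `f : G → ℂ`. -/
noncomputable def l2norm {G : Type*} [Group G] (f : MonoidAlgebra ℂ G) : ℝ :=
  Real.sqrt (∑ γ ∈ f.coeff.support, ‖f.coeff γ‖ ^ 2)

/-- The operator norm of left convolution by `f` on `ℓ²(G)`. -/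
noncomputable def opNorm {G : Type*} [Group G] (f : MonoidAlgebra ℂ G) : ℝ :=
  sSup {c : ℝ | ∃ g : MonoidAlgebra ℂ G, l2norm g = 1 ∧ c = l2norm (f * g)}

/-- The weighted ℓ²-norm `‖f‖_{ℓ,s}`. -/
noncomputable def sobolevNorm {G : Type*} [Group G] (ℓ : G → ℝ) (s : ℝ)
    (f : MonoidAlgebra ℂ G) : ℝ :=
  Real.sqrt (∑ γ ∈ f.coeff.support, ‖f.coeff γ‖ ^ 2 * (1 + ℓ γ) ^ (2 * s))

/-- `ℓ` is a length function on the group `G`. -/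
def IsLengthFunction {G : Type*} [Group G] (ℓ : G → ℝ) : Prop :=
  ℓ 1 = 0 ∧ (∀ γ, 0 ≤ ℓ γ) ∧ (∀ γ : G, ℓ γ⁻¹ = ℓ γ) ∧ ∀ γ μ : G, ℓ (γ * μ) ≤ ℓ γ + ℓ μ

/-- `G` has property RD with respect to the length function `ℓ`. -/
def PropertyRD {G : Type*} [Group G] (ℓ : G → ℝ) : Prop :=
  ∃ C s : ℝ, 0 < C ∧ 0 < s ∧ ∀ f : MonoidAlgebra ℂ G, opNorm f ≤ C * sobolevNorm ℓ s f

/-!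
For a finite set `A ⊆ G`, the augmentation `MonoidAlgebra.lift ℂ ℂ G 1` (the sum of the
coefficients) of `𝟙_A * 𝟙_A` equals `|A|²`, and `𝟙_A * 𝟙_A` is supported on `A * A`; Cauchy–Schwarz
then gives `|A|² ≤ √|A * A| · ‖𝟙_A * 𝟙_A‖₂ ≤ √|A * A| · ‖𝟙_A‖_* · √|A|`, i.e.
`‖𝟙_A‖_*² ≥ |A|³ / |A * A|`. For `A = {γ, …, γᴺ}` we have `|A| = N` and `|A * A| ≤ 2N`, so
`‖𝟙_A‖_*² ≥ N / 2`, while exponential distortion puts `A` in the ball of radius `C log (N + 1)`,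
so `‖𝟙_A‖_{ℓ,s}² ≤ N (1 + C log (N + 1))^{2s}`. Property RD would force
`N ≲ (1 + C log (N + 1))^{2s}` for every `N`, which fails for large `N`.
-/

open Finset Filter Asymptotics Real
open scoped Pointwise

section L2

variable {G : Type*} [Group G]

lemma l2norm_eq_sqrt_sum_of_subset {f : MonoidAlgebra ℂ G} {T : Finset G}
    (hT : f.coeff.support ⊆ T) : l2norm f = √(∑ x ∈ T, ‖f.coeff x‖ ^ 2) := by
  rw [l2norm, sum_subset hT fun x _ hx => by simp [Finsupp.notMem_support_iff.mp hx]]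

lemma l2norm_eq_norm_toLp {f : MonoidAlgebra ℂ G} {T : Finset G} (hT : f.coeff.support ⊆ T) :
    l2norm f = ‖(WithLp.toLp 2 fun x : T => f.coeff x : EuclideanSpace ℂ T)‖ := by
  rw [l2norm_eq_sqrt_sum_of_subset hT, EuclideanSpace.norm_eq]
  exact congrArg _ (sum_coe_sort T fun x => ‖f.coeff x‖ ^ 2).symm

lemma l2norm_nonneg (f : MonoidAlgebra ℂ G) : 0 ≤ l2norm f := sqrt_nonneg _

lemma l2norm_zero : l2norm (0 : MonoidAlgebra ℂ G) = 0 := by simp [l2norm]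

lemma l2norm_add_le (f g : MonoidAlgebra ℂ G) : l2norm (f + g) ≤ l2norm f + l2norm g := by
  classical
  let T := f.coeff.support ∪ g.coeff.support
  rw [l2norm_eq_norm_toLp (show (f + g).coeff.support ⊆ T from Finsupp.support_add),
    l2norm_eq_norm_toLp (T := T) subset_union_left,
    l2norm_eq_norm_toLp (T := T) subset_union_right,
    show (fun x : T => (f + g).coeff x) = (fun x : T => f.coeff x) + fun x : T => g.coeff x
      from rfl, WithLp.toLp_add]
  exact norm_add_le _ _

lemma l2norm_sum_le {ι : Type*} (s : Finset ι) (f : ι → MonoidAlgebra ℂ G) :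
    l2norm (∑ i ∈ s, f i) ≤ ∑ i ∈ s, l2norm (f i) :=
  le_sum_of_subadditive l2norm l2norm_zero.le l2norm_add_le s f

lemma l2norm_smul (c : ℂ) (f : MonoidAlgebra ℂ G) : l2norm (c • f) = ‖c‖ * l2norm f := by
  have hsupp : (c • f).coeff.support ⊆ f.coeff.support := Finsupp.support_smul
  rw [l2norm_eq_norm_toLp hsupp, l2norm_eq_norm_toLp subset_rfl, ← norm_smul]
  rfl

lemma l2norm_single_mul (a : G) (c : ℂ) (g : MonoidAlgebra ℂ G) :
    l2norm (MonoidAlgebra.single a c * g) = ‖c‖ * l2norm g := by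
  have hT : (MonoidAlgebra.single a c * g).coeff.support ⊆
      g.coeff.support.map (Equiv.mulLeft a).toEmbedding := by
    intro x hx
    rw [Finsupp.mem_support_iff, MonoidAlgebra.coeff_single_mul_apply] at hx
    exact mem_map.2 ⟨a⁻¹ * x, Finsupp.mem_support_iff.2 (right_ne_zero_of_mul hx), by simp⟩
  rw [l2norm_eq_sqrt_sum_of_subset hT, sum_map, l2norm, ← sqrt_sq (norm_nonneg c),
    ← sqrt_mul (sq_nonneg _), mul_sum]
  simp [mul_pow]

lemma l2norm_mul_le (f g : MonoidAlgebra ℂ G) :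
    l2norm (f * g) ≤ (∑ x ∈ f.coeff.support, ‖f.coeff x‖) * l2norm g := by
  conv_lhs => rw [← MonoidAlgebra.sum_coeff_single f, Finsupp.sum, sum_mul]
  refine (l2norm_sum_le _ _).trans_eq ?_
  simp only [l2norm_single_mul, sum_mul]

lemma bddAbove_l2norm_mul (f : MonoidAlgebra ℂ G) :
    BddAbove {c : ℝ | ∃ g : MonoidAlgebra ℂ G, l2norm g = 1 ∧ c = l2norm (f * g)} := by
  refine ⟨∑ x ∈ f.coeff.support, ‖f.coeff x‖, ?_⟩
  rintro _ ⟨g, hg, rfl⟩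
  simpa [hg] using l2norm_mul_le f g

lemma opNorm_nonneg (f : MonoidAlgebra ℂ G) : 0 ≤ opNorm f :=
  Real.sSup_nonneg fun _ ⟨_, _, hc⟩ => hc ▸ l2norm_nonneg _

lemma l2norm_mul_le_opNorm_mul (f g : MonoidAlgebra ℂ G) :
    l2norm (f * g) ≤ opNorm f * l2norm g := by
  rcases (l2norm_nonneg g).eq_or_lt with hg | hg
  · simpa [← hg] using l2norm_mul_le f g
  have hunit : l2norm (((l2norm g)⁻¹ : ℂ) • g) = 1 := by
    rw [l2norm_smul, ← Complex.ofReal_inv, Complex.norm_real, norm_inv, norm_of_nonneg hg.le,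
      inv_mul_cancel₀ hg.ne']
  have := le_csSup (bddAbove_l2norm_mul f) ⟨_, hunit, rfl⟩
  rw [mul_smul_comm, l2norm_smul, ← Complex.ofReal_inv, Complex.norm_real, norm_inv,
    norm_of_nonneg hg.le, inv_mul_le_iff₀ hg, mul_comm] at this
  exact this

end L2

section Indicator

variable {G : Type*}

noncomputable def finsetIndicator (A : Finset G) : MonoidAlgebra ℂ G :=
  ∑ a ∈ A, MonoidAlgebra.single a 1

lemma coeff_finsetIndicator [DecidableEq G] (A : Finset G) (x : G) :
    (finsetIndicator A).coeff x = if x ∈ A then 1 else 0 := by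
  simp [finsetIndicator, MonoidAlgebra.coeff_sum, MonoidAlgebra.coeff_single, Finsupp.single_apply]

lemma support_coeff_finsetIndicator (A : Finset G) : (finsetIndicator A).coeff.support = A := by
  classical
  ext x
  simp [coeff_finsetIndicator]

variable [Group G]

lemma l2norm_finsetIndicator (A : Finset G) : l2norm (finsetIndicator A) = √(#A : ℝ) := by
  classical
  rw [l2norm, support_coeff_finsetIndicator]
  congr 1
  simp +contextual [coeff_finsetIndicator]

lemma sobolevNorm_finsetIndicator (ℓ : G → ℝ) (s : ℝ) (A : Finset G) :
    sobolevNorm ℓ s (finsetIndicator A) = √(∑ a ∈ A, (1 + ℓ a) ^ (2 * s)) := by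
  classical
  rw [sobolevNorm, support_coeff_finsetIndicator]
  congr 1
  exact sum_congr rfl fun a ha => by simp [coeff_finsetIndicator, ha]

lemma sobolevNorm_finsetIndicator_sq_le {ℓ : G → ℝ} {s M : ℝ} (hs : 0 ≤ s) {A : Finset G}
    (hℓ : ∀ a ∈ A, 0 ≤ ℓ a) (hM : ∀ a ∈ A, ℓ a ≤ M) :
    sobolevNorm ℓ s (finsetIndicator A) ^ 2 ≤ #A * (1 + M) ^ (2 * s) := by
  rw [sobolevNorm_finsetIndicator, sq_sqrt (sum_nonneg fun a ha => by have := hℓ a ha; positivity),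
    ← nsmul_eq_mul]
  refine sum_le_card_nsmul _ _ _ fun a ha => ?_
  have := hℓ a ha
  exact rpow_le_rpow (by linarith) (by linarith [hM a ha]) (by linarith)

lemma lift_one_eq_sum_of_subset {f : MonoidAlgebra ℂ G} {T : Finset G}
    (hT : f.coeff.support ⊆ T) : MonoidAlgebra.lift ℂ ℂ G 1 f = ∑ x ∈ T, f.coeff x := by
  simp only [MonoidAlgebra.lift_apply, MonoidHom.one_apply, smul_eq_mul, mul_one]
  exact Finsupp.sum_of_support_subset _ hT _ fun _ _ => rfl

lemma norm_lift_one_le {f : MonoidAlgebra ℂ G} {T : Finset G} (hT : f.coeff.support ⊆ T) :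
    ‖MonoidAlgebra.lift ℂ ℂ G 1 f‖ ≤ √(#T : ℝ) * l2norm f := by
  rw [lift_one_eq_sum_of_subset hT, l2norm_eq_sqrt_sum_of_subset hT]
  calc ‖∑ x ∈ T, f.coeff x‖ ≤ ∑ x ∈ T, 1 * ‖f.coeff x‖ := by simpa using norm_sum_le _ _
    _ ≤ √(∑ _x ∈ T, (1 : ℝ) ^ 2) * √(∑ x ∈ T, ‖f.coeff x‖ ^ 2) := sum_mul_le_sqrt_mul_sqrt _ _ _
    _ = √(#T : ℝ) * √(∑ x ∈ T, ‖f.coeff x‖ ^ 2) := by simp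

lemma lift_one_finsetIndicator (A : Finset G) :
    MonoidAlgebra.lift ℂ ℂ G 1 (finsetIndicator A) = #A := by
  simp [finsetIndicator]

theorem card_pow_three_le_card_mul_mul_opNorm_sq [DecidableEq G] (A : Finset G) :
    (#A : ℝ) ^ 3 ≤ #(A * A) * opNorm (finsetIndicator A) ^ 2 := by
  set f := finsetIndicator A
  have hsupp : (f * f).coeff.support ⊆ A * A := by
    simpa [f, support_coeff_finsetIndicator] using MonoidAlgebra.support_coeff_mul_subset f f
  have key : (#A : ℝ) ^ 2 ≤ √(#(A * A) : ℝ) * (opNorm f * √(#A : ℝ)) := by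
    calc (#A : ℝ) ^ 2 = ‖MonoidAlgebra.lift ℂ ℂ G 1 (f * f)‖ := by
          simp [f, lift_one_finsetIndicator, sq]
      _ ≤ √(#(A * A) : ℝ) * l2norm (f * f) := norm_lift_one_le hsupp
      _ ≤ √(#(A * A) : ℝ) * (opNorm f * l2norm f) :=
          mul_le_mul_of_nonneg_left (l2norm_mul_le_opNorm_mul f f) (sqrt_nonneg _)
      _ = √(#(A * A) : ℝ) * (opNorm f * √(#A : ℝ)) := by rw [l2norm_finsetIndicator]
  have hsq := pow_le_pow_left₀ (by positivity) key 2
  rw [mul_pow, mul_pow, sq_sqrt (Nat.cast_nonneg _), sq_sqrt (Nat.cast_nonneg _)] at hsq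
  rcases (Nat.cast_nonneg (α := ℝ) #A).eq_or_lt with hA | hA
  · rw [← hA, zero_pow three_ne_zero]; positivity
  · nlinarith

end Indicator

theorem PropertyRD.exists_card_pow_three_le {G : Type*} [Group G] [DecidableEq G] {ℓ : G → ℝ}
    (hRD : PropertyRD ℓ) (hℓ : ∀ γ, 0 ≤ ℓ γ) :
    ∃ K s : ℝ, 0 < K ∧ 0 < s ∧ ∀ (A : Finset G) (M : ℝ), (∀ a ∈ A, ℓ a ≤ M) →
      (#A : ℝ) ^ 3 ≤ K * #(A * A) * #A * (1 + M) ^ (2 * s) := by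
  obtain ⟨C, s, hC, hs, hRD⟩ := hRD
  refine ⟨C ^ 2, s, by positivity, hs, fun A M hM => ?_⟩
  calc (#A : ℝ) ^ 3 ≤ #(A * A) * opNorm (finsetIndicator A) ^ 2 :=
        card_pow_three_le_card_mul_mul_opNorm_sq A
    _ ≤ #(A * A) * (C ^ 2 * sobolevNorm ℓ s (finsetIndicator A) ^ 2) := by
        rw [← mul_pow]; gcongr; exacts [opNorm_nonneg _, hRD _]
    _ ≤ #(A * A) * (C ^ 2 * (#A * (1 + M) ^ (2 * s))) := by
        gcongr; exact sobolevNorm_finsetIndicator_sq_le hs.le (fun a _ => hℓ a) hM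
    _ = C ^ 2 * #(A * A) * #A * (1 + M) ^ (2 * s) := by ring

lemma isLittleO_one_add_mul_log_rpow (C : ℝ) {t : ℝ} (ht : 0 ≤ t) :
    (fun x => (1 + C * log x) ^ t) =o[atTop] id := by
  have hlog : (fun x => 1 + C * log x) =O[atTop] log :=
    isLittleO_const_log_atTop.isBigO.add ((isBigO_refl _ _).const_mul_left C)
  have hlog_nonneg : 0 ≤ᶠ[atTop] log :=
    (eventually_ge_atTop 1).mono fun x hx => log_nonneg hx
  exact (hlog.rpow ht hlog_nonneg).trans_isLittleO
    ((isLittleO_log_rpow_rpow_atTop t one_pos).congr_right fun x => rpow_one x)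

lemma isLittleO_one_add_mul_log_succ_rpow (C : ℝ) {t : ℝ} (ht : 0 ≤ t) :
    (fun N : ℕ => (1 + C * log (N + 1)) ^ t) =o[atTop] fun N : ℕ => (N : ℝ) := by
  have hsucc : Tendsto (fun N : ℕ => (N : ℝ) + 1) atTop atTop :=
    tendsto_atTop_add_const_right _ 1 tendsto_natCast_atTop_atTop
  have hsucc_le : (fun N : ℕ => (N : ℝ) + 1) =O[atTop] fun N : ℕ => (N : ℝ) :=
    IsBigO.of_bound 2 <| (eventually_ge_atTop 1).mono fun N hN => by
      have : (1 : ℝ) ≤ N := by exact_mod_cast hN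
      rw [norm_of_nonneg (by positivity), norm_of_nonneg (by positivity)]
      linarith
  exact ((isLittleO_one_add_mul_log_rpow C ht).comp_tendsto hsucc).trans_isBigO hsucc_le

lemma eventually_mul_one_add_mul_log_succ_rpow_le {C t c : ℝ} (hC : 0 ≤ C) (ht : 0 ≤ t)
    (hc : 0 < c) : ∀ᶠ N : ℕ in atTop, c * (1 + C * log (N + 1)) ^ t ≤ N := by
  filter_upwards [(isLittleO_one_add_mul_log_succ_rpow C ht).bound (inv_pos.2 hc)] with N hN
  have hlog : 0 ≤ log (N + 1) := log_nonneg (by simp)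
  rw [norm_of_nonneg (by positivity), norm_of_nonneg (by positivity), ← div_eq_inv_mul,
    le_div_iff₀' hc] at hN
  exact hN

lemma card_image_pow_Icc {G : Type*} [Group G] [DecidableEq G] {γ : G} (hγ : ¬IsOfFinOrder γ)
    (N : ℕ) : #((Icc 1 N).image (γ ^ ·)) = N := by
  rw [card_image_of_injective _ (injective_pow_iff_not_isOfFinOrder.2 hγ), Nat.card_Icc,
    Nat.add_sub_cancel]

lemma card_image_pow_Icc_mul_self_le {G : Type*} [Group G] [DecidableEq G] (γ : G) (N : ℕ) :
    #((Icc 1 N).image (γ ^ ·) * (Icc 1 N).image (γ ^ ·)) ≤ 2 * N := by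
  have hsub : (Icc 1 N).image (γ ^ ·) * (Icc 1 N).image (γ ^ ·) ⊆
      (Icc 2 (2 * N)).image (γ ^ ·) := by
    intro x hx
    simp only [Finset.mem_mul, mem_image, mem_Icc] at hx ⊢
    obtain ⟨_, ⟨i, hi, rfl⟩, _, ⟨j, hj, rfl⟩, rfl⟩ := hx
    exact ⟨i + j, by omega, pow_add γ i j⟩
  calc _ ≤ #((Icc 2 (2 * N)).image (γ ^ ·)) := card_le_card hsub
    _ ≤ #(Icc 2 (2 * N)) := card_image_le
    _ ≤ 2 * N := by rw [Nat.card_Icc]; omega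

/-- If `G` contains an element `γ` of infinite order generating an
exponentially distorted copy of `ℤ`, i.e. `ℓ(γⁿ) ≤ C·log(n+1)` for all `n ≥ 1`, then
`G` does not have property RD with respect to `ℓ`. -/
theorem exponentially_distorted_element_no_rd {G : Type*} [Group G] (ℓ : G → ℝ)
    (hℓ : IsLengthFunction ℓ) (γ : G) (hinf : ∀ n : ℕ, 1 ≤ n → γ ^ n ≠ 1)
    (C : ℝ) (hC : 0 < C)
    (hdist : ∀ n : ℕ, 1 ≤ n → ℓ (γ ^ n) ≤ C * Real.log (n + 1)) :
    ¬ PropertyRD ℓ := by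
  classical
  intro hRD
  obtain ⟨K, s, hK, hs, hsmall⟩ := hRD.exists_card_pow_three_le hℓ.2.1
  have hγ : ¬IsOfFinOrder γ := fun h =>
    let ⟨n, hn, hγn⟩ := isOfFinOrder_iff_pow_eq_one.1 h
    hinf n hn hγn
  obtain ⟨N, hKX, hN⟩ := ((eventually_mul_one_add_mul_log_succ_rpow_le hC.le
    (by positivity : 0 ≤ 2 * s) (by positivity : 0 < 4 * K)).and (eventually_ge_atTop 1)).exists
  set A := (Icc 1 N).image (γ ^ ·)
  have hlen : ∀ a ∈ A, ℓ a ≤ C * log (N + 1) := by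
    simp only [A, mem_image, mem_Icc]
    rintro _ ⟨k, ⟨hk1, hkN⟩, rfl⟩
    exact (hdist k hk1).trans (by gcongr)
  have hcube := hsmall A _ hlen
  rw [card_image_pow_Icc hγ] at hcube
  have hAA : (#(A * A) : ℝ) ≤ 2 * N := by exact_mod_cast card_image_pow_Icc_mul_self_le γ N
  have hN' : (1 : ℝ) ≤ N := by exact_mod_cast hN
  have hlog : 0 ≤ log (N + 1) := log_nonneg (by simp)
  have hX : 0 ≤ K * N * (1 + C * log (N + 1)) ^ (2 * s) := by positivity
  nlinarith [mul_le_mul_of_nonneg_right hAA hX,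
    mul_le_mul_of_nonneg_left hKX (by positivity : (0 : ℝ) ≤ N ^ 2)]
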